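/- Fix a finite undirected graph G with edge set E, strictly positive capacities c ∈ ℝ_{>0}^E, a finite commodity set H such that for every h ∈ H the endpoints s(h), t(h) lie in the same connected component of G, and a nonempty compact convex demand set D ⊆ ℝ_{≥0}^H. Let cong_stat = inf_{u ∈ U_stat(D)} max_{e∈E} u(e)/c(e) and cong_dyn = inf_{u ∈ U(D)} max_{e∈E} u(e)/c(e). Then there exists λ ∈ ℝ_{≥0}^E with Σ_{e∈E} λ(e)·c(e) = 1 such that inf_{u ∈ U_stat(D)} Σ_{e∈E} λ(e)·u(e) = cong_stat and inf_{u ∈ U(D)} Σ_{e∈E} λ(e)·u(e) ≤ cong_dyn. In particular, if cong_dyn > 0 and inf_{u ∈ U(D)} Σ_e λ(e)·u(e) > 0, then the ratio of the optimal static linear reservation cost to the optimal dynamic linear reservation cost for the cost vector λ is at least cong_stat / cong_dyn. -/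

import Mathlib

open scoped BigOperators

/-- Net flow out of vertex `v` for a single-commodity flow `f` on an undirected
graph whose edges `e` have endpoints `src e` and `dst e`; `f e true` is the flow
on `e` oriented from `src e` to `dst e`, `f e false` the flow on the opposite
orientation. -/
def netOut {V E : Type*} [Fintype E] [DecidableEq V]
    (src dst : E → V) (f : E → Bool → ℝ) (v : V) : ℝ :=
  ∑ e, ((if src e = v then f e true - f e false else 0) +
        (if dst e = v then f e false - f e true else 0))

/-- `f` is a routing of the demand vector `d` under the reservation `u`:
each commodity flow is nonnegative, conserved at every vertex other than the
endpoints of the commodity, ships a net flow of `d h` out of `s h`, and the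
total flow (in both directions) on each edge is at most `u e`. -/
def IsRouting {V E H : Type*} [Fintype E] [Fintype H] [DecidableEq V]
    (src dst : E → V) (s t : H → V) (d : H → ℝ) (u : E → ℝ)
    (f : H → E → Bool → ℝ) : Prop :=
  (∀ h e b, 0 ≤ f h e b) ∧
  (∀ h v, v ≠ s h → v ≠ t h → netOut src dst (f h) v = 0) ∧
  (∀ h, netOut src dst (f h) (s h) = d h) ∧
  (∀ e, (∑ h, (f h e true + f h e false)) ≤ u e)

/-- `d` is routable under the reservation `u`. -/
def Routable {V E H : Type*} [Fintype E] [Fintype H] [DecidableEq V]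
    (src dst : E → V) (s t : H → V) (d : H → ℝ) (u : E → ℝ) : Prop :=
  ∃ f, IsRouting src dst s t d u f


/-- The set of reservations under which every demand vector of `D` is routable
(dynamic routing). -/
def Uset {V E H : Type*} [Fintype E] [Fintype H] [DecidableEq V]
    (src dst : E → V) (s t : H → V) (D : Set (H → ℝ)) : Set (E → ℝ) :=
  {u | (∀ e, 0 ≤ u e) ∧ ∀ d ∈ D, Routable src dst s t d u}

/-- A static routing template: for every commodity `h`, a nonnegative flow
`x h` shipping one unit from `s h` to `t h`. -/
def IsUnitTemplate {V E H : Type*} [Fintype E] [DecidableEq V]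
    (src dst : E → V) (s t : H → V) (x : H → E → Bool → ℝ) : Prop :=
  (∀ h e b, 0 ≤ x h e b) ∧
  (∀ h v, v ≠ s h → v ≠ t h → netOut src dst (x h) v = 0) ∧
  (∀ h, netOut src dst (x h) (s h) = 1)

/-- The set of reservations within which some static routing template serves
every demand vector of `D`: the flow of commodity `h` is `d h • x h`, and for
every edge `e` and every `d ∈ D` the total flow on `e` is at most `u e`. -/
def UsetStat {V E H : Type*} [Fintype E] [Fintype H] [DecidableEq V]
    (src dst : E → V) (s t : H → V) (D : Set (H → ℝ)) : Set (E → ℝ) :=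
  {u | (∀ e, 0 ≤ u e) ∧ ∃ x, IsUnitTemplate src dst s t x ∧
    ∀ d ∈ D, ∀ e, (∑ h, d h * (x h e true + x h e false)) ≤ u e}

/-!
The static reservation set is convex and upward closed, and no static reservation has congestion
below `cong_stat`, so it is disjoint from the open box of vectors strictly below `cong_stat • c`.
A Hahn–Banach hyperplane separating the two has a nonnegative normal vector, because the box is a
lower set; normalized so that `λ ⬝ᵥ c = 1` it is the cost vector, and every static reservation
costs at least `cong_stat` under it. Conversely, for any normalized `λ ≥ 0` and any upward closed
reservation set, a reservation `u` can be enlarged to `congestion c u • c`, whose cost is exactly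
the congestion of `u`; this gives both `≤` inequalities.
-/

section Congestion

variable {E : Type*} [Fintype E] {c : E → ℝ}

noncomputable def congestion (c u : E → ℝ) : ℝ := ⨆ e, u e / c e

theorem div_le_congestion (u : E → ℝ) (e : E) : u e / c e ≤ congestion c u :=
  le_ciSup (f := fun e => u e / c e) (Set.finite_range _).bddAbove e

theorem le_congestion_mul (hc : ∀ e, 0 < c e) (u : E → ℝ) (e : E) :
    u e ≤ congestion c u * c e :=
  (div_le_iff₀ (hc e)).1 (div_le_congestion u e)

theorem congestion_nonneg [Nonempty E] (hc : ∀ e, 0 < c e) {u : E → ℝ} (hu : 0 ≤ u) :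
    0 ≤ congestion c u :=
  let ⟨e⟩ := ‹Nonempty E›
  (div_nonneg (hu e) (hc e).le).trans (div_le_congestion u e)

theorem congestion_lt_of_forall_lt [Nonempty E] (hc : ∀ e, 0 < c e) {u : E → ℝ} {r : ℝ}
    (h : ∀ e, u e < r * c e) : congestion c u < r := by
  obtain ⟨e, he⟩ := exists_eq_ciSup_of_finite (f := fun e => u e / c e)
  rw [congestion, ← he]
  exact (div_lt_iff₀ (hc e)).2 (h e)

theorem exists_nonneg_dotProduct_eq_one [Nonempty E] (hc : ∀ e, 0 < c e) :
    ∃ lam : E → ℝ, 0 ≤ lam ∧ lam ⬝ᵥ c = 1 := by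
  have hsum : 0 < ∑ e, c e := Finset.sum_pos (fun e _ => hc e) Finset.univ_nonempty
  refine ⟨(∑ e, c e)⁻¹ • 1, smul_nonneg (inv_nonneg.2 hsum.le) zero_le_one, ?_⟩
  rw [smul_dotProduct, one_dotProduct, smul_eq_mul, inv_mul_cancel₀ hsum.ne']

variable {T : Set (E → ℝ)}

theorem sInf_dotProduct_le_sInf_congestion (hc : ∀ e, 0 < c e) {lam : E → ℝ} (hlam : 0 ≤ lam)
    (hlamc : lam ⬝ᵥ c = 1) (hT : IsUpperSet T) (hTnn : ∀ u ∈ T, 0 ≤ u) :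
    sInf ((lam ⬝ᵥ ·) '' T) ≤ sInf (congestion c '' T) := by
  rcases T.eq_empty_or_nonempty with rfl | hTne
  · simp
  have hbdd : BddBelow ((lam ⬝ᵥ ·) '' T) :=
    ⟨0, Set.forall_mem_image.2 fun u hu => dotProduct_nonneg_of_nonneg hlam (hTnn u hu)⟩
  refine le_csInf (hTne.image _) (Set.forall_mem_image.2 fun u hu => ?_)
  have hmem : congestion c u • c ∈ T := hT (le_congestion_mul hc u) hu
  calc sInf ((lam ⬝ᵥ ·) '' T) ≤ lam ⬝ᵥ (congestion c u • c) := csInf_le hbdd ⟨_, hmem, rfl⟩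
    _ = congestion c u := by rw [dotProduct_smul, hlamc, smul_eq_mul, mul_one]

end Congestion

section Separation

variable {E : Type*} [Fintype E]

theorem exists_dotProduct_separation {O T : Set (E → ℝ)} (hOc : Convex ℝ O) (hOo : IsOpen O)
    (hTc : Convex ℝ T) (hOT : Disjoint O T) :
    ∃ (w : E → ℝ) (a : ℝ), (∀ v ∈ O, w ⬝ᵥ v < a) ∧ ∀ u ∈ T, a ≤ w ⬝ᵥ u := by
  classical
  obtain ⟨f, a, hfO, hfT⟩ := geometric_hahn_banach_open hOc hOo hTc hOT
  obtain ⟨w, hw⟩ := (dotProductEquiv ℝ E).surjective f.toLinearMap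
  have hf : ∀ v, f v = w ⬝ᵥ v := fun v => (LinearMap.congr_fun hw v).symm
  exact ⟨w, a, fun v hv => hf v ▸ hfO v hv, fun u hu => hf u ▸ hfT u hu⟩

theorem IsLowerSet.nonneg_of_forall_dotProduct_lt {O : Set (E → ℝ)} (hO : IsLowerSet O)
    (hOne : O.Nonempty) {w : E → ℝ} {a : ℝ} (h : ∀ v ∈ O, w ⬝ᵥ v < a) : 0 ≤ w := by
  classical
  intro e
  by_contra! hwe : w e < 0
  obtain ⟨v, hv⟩ := hOne
  -- moving down along `e` far enough raises `w ⬝ᵥ ·` from `w ⬝ᵥ v` up to exactly `a`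
  set t := (a - w ⬝ᵥ v) / -w e with ht_def
  have ht : 0 ≤ t := div_nonneg (sub_nonneg.2 (h v hv).le) (neg_nonneg.2 hwe.le)
  have hmem : v - t • Pi.single e 1 ∈ O :=
    hO (sub_le_self _ (smul_nonneg ht (Pi.single_nonneg.2 zero_le_one))) hv
  have hval : w ⬝ᵥ (v - t • Pi.single e 1) = a := by
    rw [dotProduct_sub, dotProduct_smul, dotProduct_single, smul_eq_mul, mul_one, ht_def]
    field_simp [hwe.ne]
    ring
  exact (h _ hmem).ne hval

end Separation

section CostVector

variable {E : Type*} [Fintype E] [Nonempty E] {c : E → ℝ} {T : Set (E → ℝ)}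

theorem exists_cost_sInf_congestion_le_dotProduct (hc : ∀ e, 0 < c e) (hTc : Convex ℝ T)
    (hTne : T.Nonempty) (hbdd : BddBelow (congestion c '' T)) :
    ∃ lam : E → ℝ, 0 ≤ lam ∧ lam ⬝ᵥ c = 1 ∧ ∀ u ∈ T, sInf (congestion c '' T) ≤ lam ⬝ᵥ u := by
  set ρ := sInf (congestion c '' T)
  set O : Set (E → ℝ) := Set.univ.pi fun e => Set.Iio (ρ * c e)
  have hOlower : IsLowerSet O := fun v' v hv'v hv e _ => (hv'v e).trans_lt (hv e trivial)
  have hsmul_mem : ∀ r < ρ, r • c ∈ O := fun r hr e _ =>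
    mul_lt_mul_of_pos_right hr (hc e)
  have hOT : Disjoint O T := Set.disjoint_left.2 fun v hvO hvT =>
    (congestion_lt_of_forall_lt hc fun e => hvO e trivial).not_ge (csInf_le hbdd ⟨v, hvT, rfl⟩)
  obtain ⟨w, a, hwO, hwT⟩ := exists_dotProduct_separation
    (convex_pi fun e _ => convex_Iio _) (isOpen_set_pi Set.finite_univ fun e _ => isOpen_Iio)
    hTc hOT
  have hOne : O.Nonempty := ⟨(ρ - 1) • c, hsmul_mem _ (sub_one_lt ρ)⟩
  have hw : 0 ≤ w := hOlower.nonneg_of_forall_dotProduct_lt hOne hwO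
  have hwc : 0 < w ⬝ᵥ c := by
    obtain ⟨e, he⟩ : ∃ e, 0 < w e := by
      by_contra! hw_nonpos
      obtain ⟨v, hv⟩ := hOne
      obtain ⟨u, hu⟩ := hTne
      have hw0 : w = 0 := funext fun e => le_antisymm (hw_nonpos e) (hw e)
      have := (hwO v hv).trans_le (hwT u hu)
      simp [hw0] at this
    exact Finset.sum_pos' (fun e _ => mul_nonneg (hw e) (hc e).le)
      ⟨e, Finset.mem_univ e, mul_pos he (hc e)⟩
  refine ⟨(w ⬝ᵥ c)⁻¹ • w, smul_nonneg (inv_nonneg.2 hwc.le) hw, ?_, fun u hu => ?_⟩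
  · rw [smul_dotProduct, smul_eq_mul, inv_mul_cancel₀ hwc.ne']
  rw [smul_dotProduct, smul_eq_mul, inv_mul_eq_div]
  refine le_of_forall_lt fun r hr => (lt_div_iff₀ hwc).2 ?_
  calc r * (w ⬝ᵥ c) = w ⬝ᵥ (r • c) := by rw [dotProduct_smul, smul_eq_mul, mul_comm]
    _ < a := hwO _ (hsmul_mem r hr)
    _ ≤ w ⬝ᵥ u := hwT u hu

theorem exists_cost_sInf_dotProduct_eq_sInf_congestion (hc : ∀ e, 0 < c e) (hTc : Convex ℝ T)
    (hTup : IsUpperSet T) (hTnn : ∀ u ∈ T, 0 ≤ u) :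
    ∃ lam : E → ℝ, 0 ≤ lam ∧ lam ⬝ᵥ c = 1 ∧
      sInf ((lam ⬝ᵥ ·) '' T) = sInf (congestion c '' T) := by
  rcases T.eq_empty_or_nonempty with rfl | hTne
  · obtain ⟨lam, hlam, hlamc⟩ := exists_nonneg_dotProduct_eq_one hc
    exact ⟨lam, hlam, hlamc, by simp⟩
  have hbdd : BddBelow (congestion c '' T) :=
    ⟨0, Set.forall_mem_image.2 fun u hu => congestion_nonneg hc (hTnn u hu)⟩
  obtain ⟨lam, hlam, hlamc, hle⟩ := exists_cost_sInf_congestion_le_dotProduct hc hTc hTne hbdd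
  exact ⟨lam, hlam, hlamc, le_antisymm (sInf_dotProduct_le_sInf_congestion hc hlam hlamc hTup hTnn)
    (le_csInf (hTne.image _) (Set.forall_mem_image.2 hle))⟩

end CostVector

section Reservations

variable {V E H : Type*} [Fintype E] [DecidableEq V] {src dst : E → V} {s t : H → V}

theorem netOut_add (f g : E → Bool → ℝ) (v : V) :
    netOut src dst (f + g) v = netOut src dst f v + netOut src dst g v := by
  simp only [netOut, Pi.add_apply, ← Finset.sum_add_distrib]
  refine Finset.sum_congr rfl fun e _ => ?_
  split_ifs <;> ring

theorem netOut_smul (a : ℝ) (f : E → Bool → ℝ) (v : V) :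
    netOut src dst (a • f) v = a * netOut src dst f v := by
  simp only [netOut, Pi.smul_apply, smul_eq_mul, Finset.mul_sum]
  refine Finset.sum_congr rfl fun e _ => ?_
  split_ifs <;> ring

theorem IsUnitTemplate.convex_comb {x₁ x₂ : H → E → Bool → ℝ}
    (hx₁ : IsUnitTemplate src dst s t x₁) (hx₂ : IsUnitTemplate src dst s t x₂) {a b : ℝ}
    (ha : 0 ≤ a) (hb : 0 ≤ b) (hab : a + b = 1) :
    IsUnitTemplate src dst s t (a • x₁ + b • x₂) := by
  refine ⟨fun h e i => ?_, fun h v hvs hvt => ?_, fun h => ?_⟩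
  · exact add_nonneg (mul_nonneg ha (hx₁.1 h e i)) (mul_nonneg hb (hx₂.1 h e i))
  · rw [Pi.add_apply, Pi.smul_apply, Pi.smul_apply, netOut_add, netOut_smul, netOut_smul,
      hx₁.2.1 h v hvs hvt, hx₂.2.1 h v hvs hvt]
    ring
  · rw [Pi.add_apply, Pi.smul_apply, Pi.smul_apply, netOut_add, netOut_smul, netOut_smul,
      hx₁.2.2 h, hx₂.2.2 h]
    linarith

variable [Fintype H]

theorem IsRouting.mono {d : H → ℝ} {u u' : E → ℝ} {f : H → E → Bool → ℝ}
    (hf : IsRouting src dst s t d u f) (huu' : u ≤ u') : IsRouting src dst s t d u' f :=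
  ⟨hf.1, hf.2.1, hf.2.2.1, fun e => (hf.2.2.2 e).trans (huu' e)⟩

variable (src dst s t) (D : Set (H → ℝ))

theorem isUpperSet_uset : IsUpperSet (Uset src dst s t D) :=
  fun _ _ huu' ⟨hnn, hroute⟩ => ⟨fun e => (hnn e).trans (huu' e), fun d hd =>
    let ⟨f, hf⟩ := hroute d hd; ⟨f, hf.mono huu'⟩⟩

theorem isUpperSet_usetStat : IsUpperSet (UsetStat src dst s t D) :=
  fun _ _ huu' ⟨hnn, x, hx, hload⟩ =>
    ⟨fun e => (hnn e).trans (huu' e), x, hx, fun d hd e => (hload d hd e).trans (huu' e)⟩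

theorem convex_usetStat : Convex ℝ (UsetStat src dst s t D) := by
  rintro u₁ ⟨hnn₁, x₁, hx₁, hload₁⟩ u₂ ⟨hnn₂, x₂, hx₂, hload₂⟩ a b ha hb hab
  refine ⟨fun e => add_nonneg (mul_nonneg ha (hnn₁ e)) (mul_nonneg hb (hnn₂ e)),
    a • x₁ + b • x₂, hx₁.convex_comb hx₂ ha hb hab, fun d hd e => ?_⟩
  calc ∑ h, d h * ((a • x₁ + b • x₂) h e true + (a • x₁ + b • x₂) h e false)
      = a * ∑ h, d h * (x₁ h e true + x₁ h e false)
          + b * ∑ h, d h * (x₂ h e true + x₂ h e false) := by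
        simp only [Finset.mul_sum, ← Finset.sum_add_distrib, Pi.add_apply, Pi.smul_apply,
          smul_eq_mul]
        exact Finset.sum_congr rfl fun h _ => by ring
    _ ≤ a * u₁ e + b * u₂ e := by gcongr; exacts [hload₁ d hd e, hload₂ d hd e]
    _ = (a • u₁ + b • u₂) e := rfl

end Reservations

theorem static_over_dynamic_linear_cost_ratio_general
    {V E H : Type*} [Fintype E] [Nonempty E] [Fintype H] [DecidableEq V]
    (src dst : E → V) (s t : H → V)
    (c : E → ℝ) (hc : ∀ e, 0 < c e)
    (D : Set (H → ℝ)) :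
    ∃ lam : E → ℝ, (∀ e, 0 ≤ lam e) ∧ (∑ e, lam e * c e) = 1 ∧
      sInf ((fun u : E → ℝ => ∑ e, lam e * u e) '' UsetStat src dst s t D) =
        sInf ((fun u : E → ℝ => ⨆ e, u e / c e) '' UsetStat src dst s t D) ∧
      sInf ((fun u : E → ℝ => ∑ e, lam e * u e) '' Uset src dst s t D) ≤
        sInf ((fun u : E → ℝ => ⨆ e, u e / c e) '' Uset src dst s t D) ∧
      (0 < sInf ((fun u : E → ℝ => ⨆ e, u e / c e) '' Uset src dst s t D) →
        0 < sInf ((fun u : E → ℝ => ∑ e, lam e * u e) '' Uset src dst s t D) →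
        sInf ((fun u : E → ℝ => ⨆ e, u e / c e) '' UsetStat src dst s t D) /
            sInf ((fun u : E → ℝ => ⨆ e, u e / c e) '' Uset src dst s t D) ≤
          sInf ((fun u : E → ℝ => ∑ e, lam e * u e) '' UsetStat src dst s t D) /
            sInf ((fun u : E → ℝ => ∑ e, lam e * u e) '' Uset src dst s t D)) := by
  obtain ⟨lam, hlam, hlamc, hstat⟩ := exists_cost_sInf_dotProduct_eq_sInf_congestion hc
    (convex_usetStat src dst s t D) (isUpperSet_usetStat src dst s t D) fun _ hu => hu.1
  have hdyn := sInf_dotProduct_le_sInf_congestion hc hlam hlamc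
    (isUpperSet_uset src dst s t D) fun _ hu => hu.1
  have hstat_nonneg : 0 ≤ sInf (congestion c '' UsetStat src dst s t D) :=
    Real.sInf_nonneg (Set.forall_mem_image.2 fun _ hu => congestion_nonneg hc hu.1)
  refine ⟨lam, hlam, hlamc, hstat, hdyn, fun _ hpos => ?_⟩
  exact (div_le_div_of_nonneg_left hstat_nonneg hpos hdyn).trans_eq (congrArg (· / _) hstat.symm)

/-- **From congestion gaps to linear-cost gaps (Lagrangian argument).**
Assume every commodity has its endpoints in the same connected component of the
graph and `D` is a nonempty compact convex set of nonnegative demand vectors.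
Then there is a normalized cost vector `λ ≥ 0` (with `∑_e λ e * c e = 1`) whose
optimal static linear reservation cost equals the optimal static congestion
`cong_stat`, while its optimal dynamic linear reservation cost is at most the
optimal dynamic congestion `cong_dyn`; in particular (under positivity) the
static/dynamic linear-cost ratio for `λ` is at least `cong_stat / cong_dyn`. -/
theorem static_over_dynamic_linear_cost_ratio
    {V E H : Type*} [Fintype V] [Fintype E] [Nonempty E] [Fintype H] [DecidableEq V]
    (src dst : E → V) (s t : H → V)
    (hconn : ∀ h : H, Relation.ReflTransGen
      (fun a b : V => ∃ e, (src e = a ∧ dst e = b) ∨ (src e = b ∧ dst e = a))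
      (s h) (t h))
    (c : E → ℝ) (hc : ∀ e, 0 < c e)
    (D : Set (H → ℝ)) (hDne : D.Nonempty) (hDcomp : IsCompact D)
    (hDconv : Convex ℝ D) (hDnn : ∀ d ∈ D, ∀ h, 0 ≤ d h) :
    ∃ lam : E → ℝ, (∀ e, 0 ≤ lam e) ∧ (∑ e, lam e * c e) = 1 ∧
      sInf ((fun u : E → ℝ => ∑ e, lam e * u e) '' UsetStat src dst s t D) =
        sInf ((fun u : E → ℝ => ⨆ e, u e / c e) '' UsetStat src dst s t D) ∧
      sInf ((fun u : E → ℝ => ∑ e, lam e * u e) '' Uset src dst s t D) ≤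
        sInf ((fun u : E → ℝ => ⨆ e, u e / c e) '' Uset src dst s t D) ∧
      (0 < sInf ((fun u : E → ℝ => ⨆ e, u e / c e) '' Uset src dst s t D) →
        0 < sInf ((fun u : E → ℝ => ∑ e, lam e * u e) '' Uset src dst s t D) →
        sInf ((fun u : E → ℝ => ⨆ e, u e / c e) '' UsetStat src dst s t D) /
            sInf ((fun u : E → ℝ => ⨆ e, u e / c e) '' Uset src dst s t D) ≤
          sInf ((fun u : E → ℝ => ∑ e, lam e * u e) '' UsetStat src dst s t D) /
            sInf ((fun u : E → ℝ => ∑ e, lam e * u e) '' Uset src dst s t D)) :=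
  static_over_dynamic_linear_cost_ratio_general src dst s t c hc D
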